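/- arXiv:0705.2486 — 3 statements merged into one kernel-verified Lean document; each statement's English description precedes it below -/
import Mathlib

section
/- Let v(z) = u(z)² + u′(z), a rational function with possible poles only at 0, the w¹_j and the w⁰_j. Then: (a) for each j ∈ {1,…,m₁}, the function v extends analytically to a neighborhood of w¹_j (equivalently, v has no pole at w¹_j) if and only if the Bethe equation (B1_j) holds; (b) for each j ∈ {1,…,m₀}, the function z ↦ v(z) − 2/(z−w⁰_j)² − (k/w⁰_j)/(z−w⁰_j) extends analytically to a neighborhood of w⁰_j if and only if the Bethe equation (B0_j) holds. -/
open Finset Topology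

/-- `u(z) = -χ - ℓ/z + Σ_j 1/(z - w¹_j) - Σ_j 1/(z - w⁰_j)`. -/
noncomputable def uFun (χ ℓ : ℂ) {m₁ m₀ : ℕ} (w1 : Fin m₁ → ℂ) (w0 : Fin m₀ → ℂ)
    (z : ℂ) : ℂ :=
  -χ - ℓ / z + ∑ j, 1 / (z - w1 j) - ∑ j, 1 / (z - w0 j)

/-- `u′(z) = ℓ/z² - Σ_j 1/(z - w¹_j)² + Σ_j 1/(z - w⁰_j)²`. -/
noncomputable def uFun' (ℓ : ℂ) {m₁ m₀ : ℕ} (w1 : Fin m₁ → ℂ) (w0 : Fin m₀ → ℂ)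
    (z : ℂ) : ℂ :=
  ℓ / z ^ 2 - ∑ j, 1 / (z - w1 j) ^ 2 + ∑ j, 1 / (z - w0 j) ^ 2

/-!
Near a pole `p` of `u` with residue `ε = ±1` write `u = ε/(z-p) + A` with `A` analytic at `p`;
then `u′ = T - ε/(z-p)²` with `T` analytic, and `A(z) = A(p) + (z-p)·dslope A p z` gives
`u² + u′ = (ε² - ε)/(z-p)² + 2εA(p)/(z-p) + (analytic)`. The double pole vanishes at the `w¹_j`
(`ε = 1`) and is `2/(z-p)²` at the `w⁰_j` (`ε = -1`), and a function `c/(z-p) + (analytic)` extends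
analytically across `p` only if `c = 0`. The residue is `2A(p)`, resp. `-2A(p) - k/p`, and
`A(p)` is minus the left side of (B1_j), resp. the left side of (B0_j) minus `k/(2p)`.
-/

open Filter

section SimplePole

variable {𝕜 : Type*} [NontriviallyNormedField 𝕜]

theorem AnalyticAt.dslope {E : Type*} [NormedAddCommGroup E] [NormedSpace 𝕜 E] {f : 𝕜 → E}
    {p : 𝕜} (hf : AnalyticAt 𝕜 f p) : AnalyticAt 𝕜 (dslope f p) p :=
  let ⟨_, hP⟩ := hf
  ⟨_, hP.has_fpower_series_dslope_fslope⟩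

theorem exists_analyticAt_eq_div_sub_add_iff {H : 𝕜 → 𝕜} {p c : 𝕜} (hH : AnalyticAt 𝕜 H p) :
    (∃ G : 𝕜 → 𝕜, AnalyticAt 𝕜 G p ∧ ∀ᶠ z in 𝓝[≠] p, G z = c / (z - p) + H z) ↔ c = 0 := by
  refine ⟨fun ⟨G, hG, hGH⟩ => ?_, fun hc => ⟨H, hH, by simp [hc]⟩⟩
  set F := fun z => (z - p) * (G z - H z)
  have hF0 : Tendsto F (𝓝[≠] p) (𝓝 0) := by
    have hF : ContinuousAt F p :=
      (continuousAt_id.sub continuousAt_const).mul (hG.continuousAt.sub hH.continuousAt)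
    simpa [F] using hF.continuousWithinAt.tendsto (s := {p}ᶜ)
  have hFc : Tendsto F (𝓝[≠] p) (𝓝 c) := by
    refine tendsto_const_nhds.congr' ?_
    filter_upwards [hGH, self_mem_nhdsWithin] with z hz (hzp : z ≠ p)
    simp only [F, hz]
    field_simp [sub_ne_zero.mpr hzp]
    ring
  exact tendsto_nhds_unique hFc hF0

theorem sq_add_eq_of_ne (A T : 𝕜 → 𝕜) (ε : 𝕜) {p z : 𝕜} (hz : z ≠ p) :
    (ε / (z - p) + A z) ^ 2 + (T z - ε / (z - p) ^ 2)
      = (ε ^ 2 - ε) / (z - p) ^ 2 + 2 * ε * A p / (z - p)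
        + (2 * ε * dslope A p z + A z ^ 2 + T z) := by
  have hA : A z = A p + (z - p) * dslope A p z := by
    rw [← smul_eq_mul, sub_smul_dslope]
    ring
  rw [hA]
  field_simp [sub_ne_zero.mpr hz]
  ring

theorem exists_analyticAt_sq_add_iff {U U' A T : 𝕜 → 𝕜} {p ε c : 𝕜}
    (hA : AnalyticAt 𝕜 A p) (hT : AnalyticAt 𝕜 T p)
    (hU : ∀ z, U z = ε / (z - p) + A z) (hU' : ∀ z, U' z = T z - ε / (z - p) ^ 2) :
    (∃ G : 𝕜 → 𝕜, AnalyticAt 𝕜 G p ∧ ∀ᶠ z in 𝓝[≠] p,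
        G z = U z ^ 2 + U' z - (ε ^ 2 - ε) / (z - p) ^ 2 - c / (z - p))
      ↔ 2 * ε * A p - c = 0 := by
  have hH : AnalyticAt 𝕜 (fun z => 2 * ε * dslope A p z + A z ^ 2 + T z) p :=
    ((analyticAt_const.fun_mul hA.dslope).fun_add (hA.fun_pow 2)).fun_add hT
  rw [← exists_analyticAt_eq_div_sub_add_iff hH]
  refine exists_congr fun G => and_congr_right fun _ => eventually_congr ?_
  filter_upwards [self_mem_nhdsWithin] with z (hz : z ≠ p)
  rw [hU, hU', sq_add_eq_of_ne A T ε hz]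
  constructor <;> intro h <;> rw [h] <;> ring

end SimplePole

section PartialSums

variable (χ ℓ : ℂ) {m₁ m₀ : ℕ} (w1 : Fin m₁ → ℂ) (w0 : Fin m₀ → ℂ)

noncomputable def uFunOn (s1 : Finset (Fin m₁)) (s0 : Finset (Fin m₀)) (z : ℂ) : ℂ :=
  -χ - ℓ / z + ∑ s ∈ s1, 1 / (z - w1 s) - ∑ s ∈ s0, 1 / (z - w0 s)

noncomputable def uFunOn' (s1 : Finset (Fin m₁)) (s0 : Finset (Fin m₀)) (z : ℂ) : ℂ :=
  ℓ / z ^ 2 - ∑ s ∈ s1, 1 / (z - w1 s) ^ 2 + ∑ s ∈ s0, 1 / (z - w0 s) ^ 2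

variable {w1 w0} {s1 : Finset (Fin m₁)} {s0 : Finset (Fin m₀)} {p : ℂ}

theorem analyticAt_uFunOn (hp : p ≠ 0) (h1 : ∀ s ∈ s1, w1 s ≠ p) (h0 : ∀ s ∈ s0, w0 s ≠ p) :
    AnalyticAt ℂ (uFunOn χ ℓ w1 w0 s1 s0) p := by
  have hpole {a : ℂ} (ha : a ≠ p) : AnalyticAt ℂ (fun z => 1 / (z - a)) p :=
    analyticAt_const.div (analyticAt_id.sub analyticAt_const) (sub_ne_zero.mpr ha.symm)
  exact ((analyticAt_const.fun_sub (analyticAt_const.fun_div analyticAt_id hp)).fun_add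
      (Finset.analyticAt_fun_sum _ fun s hs => hpole (h1 s hs))).fun_sub
    (Finset.analyticAt_fun_sum _ fun s hs => hpole (h0 s hs))

theorem analyticAt_uFunOn' (hp : p ≠ 0) (h1 : ∀ s ∈ s1, w1 s ≠ p) (h0 : ∀ s ∈ s0, w0 s ≠ p) :
    AnalyticAt ℂ (uFunOn' ℓ w1 w0 s1 s0) p := by
  have hpole {a : ℂ} (ha : a ≠ p) : AnalyticAt ℂ (fun z => 1 / (z - a) ^ 2) p :=
    analyticAt_const.div ((analyticAt_id.sub analyticAt_const).pow 2)
      (pow_ne_zero 2 (sub_ne_zero.mpr ha.symm))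
  exact ((analyticAt_const.fun_div (analyticAt_id.fun_pow 2) (pow_ne_zero 2 hp)).fun_sub
      (Finset.analyticAt_fun_sum _ fun s hs => hpole (h1 s hs))).fun_add
    (Finset.analyticAt_fun_sum _ fun s hs => hpole (h0 s hs))

variable (w1 w0)

theorem uFun_eq_uFunOn_erase_left (j : Fin m₁) (z : ℂ) :
    uFun χ ℓ w1 w0 z = 1 / (z - w1 j) + uFunOn χ ℓ w1 w0 (univ.erase j) univ z := by
  rw [uFun, uFunOn, ← add_sum_erase _ _ (mem_univ j)]
  ring

theorem uFun'_eq_uFunOn'_erase_left (j : Fin m₁) (z : ℂ) :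
    uFun' ℓ w1 w0 z = uFunOn' ℓ w1 w0 (univ.erase j) univ z - 1 / (z - w1 j) ^ 2 := by
  rw [uFun', uFunOn', ← add_sum_erase _ _ (mem_univ j)]
  ring

theorem uFun_eq_uFunOn_erase_right (j : Fin m₀) (z : ℂ) :
    uFun χ ℓ w1 w0 z = -1 / (z - w0 j) + uFunOn χ ℓ w1 w0 univ (univ.erase j) z := by
  rw [uFun, uFunOn, ← add_sum_erase _ _ (mem_univ j)]
  ring

theorem uFun'_eq_uFunOn'_erase_right (j : Fin m₀) (z : ℂ) :
    uFun' ℓ w1 w0 z = uFunOn' ℓ w1 w0 univ (univ.erase j) z - -1 / (z - w0 j) ^ 2 := by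
  rw [uFun', uFunOn', ← add_sum_erase _ _ (mem_univ j)]
  ring

end PartialSums

/-- `v = u² + u′` is regular at `w¹ⱼ` iff the Bethe equation (B1ⱼ) holds, and
`v - 2/(z-w⁰ⱼ)² - (k/w⁰ⱼ)/(z-w⁰ⱼ)` is regular at `w⁰ⱼ` iff the Bethe equation (B0ⱼ) holds. -/
theorem regular_iff_bethe (χ ℓ k : ℂ) (m₁ m₀ : ℕ)
    (w1 : Fin m₁ → ℂ) (w0 : Fin m₀ → ℂ)
    (hw1 : ∀ j, w1 j ≠ 0) (hw0 : ∀ j, w0 j ≠ 0)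
    (hw1inj : Function.Injective w1) (hw0inj : Function.Injective w0)
    (hdisj : ∀ i j, w1 i ≠ w0 j) :
    (∀ j : Fin m₁,
      (∃ G : ℂ → ℂ, AnalyticAt ℂ G (w1 j) ∧
          ∀ᶠ z in 𝓝[≠] (w1 j), G z = (uFun χ ℓ w1 w0 z) ^ 2 + uFun' ℓ w1 w0 z)
        ↔ ℓ / w1 j - ∑ s ∈ univ.erase j, 1 / (w1 j - w1 s)
            + ∑ s, 1 / (w1 j - w0 s) + χ = 0) ∧
    (∀ j : Fin m₀,
      (∃ G : ℂ → ℂ, AnalyticAt ℂ G (w0 j) ∧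
          ∀ᶠ z in 𝓝[≠] (w0 j), G z = (uFun χ ℓ w1 w0 z) ^ 2 + uFun' ℓ w1 w0 z
            - 2 / (z - w0 j) ^ 2 - (k / w0 j) / (z - w0 j))
        ↔ (k / 2 - ℓ) / w0 j + ∑ s, 1 / (w0 j - w1 s)
            - ∑ s ∈ univ.erase j, 1 / (w0 j - w0 s) - χ = 0) := by
  constructor
  · intro j
    have h1 : ∀ s ∈ univ.erase j, w1 s ≠ w1 j := fun s hs => hw1inj.ne (ne_of_mem_erase hs)
    have h0 : ∀ s ∈ univ, w0 s ≠ w1 j := fun s _ => (hdisj j s).symm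
    have key := exists_analyticAt_sq_add_iff (c := 0)
      (analyticAt_uFunOn χ ℓ (hw1 j) h1 h0) (analyticAt_uFunOn' ℓ (hw1 j) h1 h0)
      (uFun_eq_uFunOn_erase_left χ ℓ w1 w0 j) (uFun'_eq_uFunOn'_erase_left ℓ w1 w0 j)
    simp only [one_pow, sub_self, zero_div, sub_zero] at key
    rw [key, uFunOn]
    constructor <;> intro h
    · linear_combination (-1 / 2 : ℂ) * h
    · linear_combination (-2 : ℂ) * h
  · intro j
    have h1 : ∀ s ∈ univ, w1 s ≠ w0 j := fun s _ => hdisj s j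
    have h0 : ∀ s ∈ univ.erase j, w0 s ≠ w0 j := fun s hs => hw0inj.ne (ne_of_mem_erase hs)
    have key := exists_analyticAt_sq_add_iff (c := k / w0 j)
      (analyticAt_uFunOn χ ℓ (hw0 j) h1 h0) (analyticAt_uFunOn' ℓ (hw0 j) h1 h0)
      (uFun_eq_uFunOn_erase_right χ ℓ w1 w0 j) (uFun'_eq_uFunOn'_erase_right ℓ w1 w0 j)
    norm_num only at key
    rw [key, uFunOn]
    constructor <;> intro h
    · linear_combination (-1 / 2 : ℂ) * h
    · linear_combination (-2 : ℂ) * h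
end

section
/- Assume the Bethe equations (RB1_j) for j = 1,…,m₁ and (RB0_j) for j = 1,…,m₀ hold. Then for every z ∈ ℂ distinct from all z_i, w¹_j, w⁰_j, one has u(z)² + u′(z) = Σ_{i=1}^N ℓ_i(ℓ_i+1)/(z−z_i)² + Σ_{i=1}^N c_i/(z−z_i) + Σ_{j=1}^{m₀} 2/(z−w⁰_j)² + Σ_{j=1}^{m₀} r_j/(z−w⁰_j), where c_i = 2ℓ_i·( Σ_{j≠i} ℓ_j/(z_i−z_j) − Σ_{j=1}^{m₁} 1/(z_i−w¹_j) + Σ_{j=1}^{m₀} 1/(z_i−w⁰_j) ), r_j = Σ_{i=1}^N k_i/(w⁰_j−z_i), and u′(z) = Σ_i ℓ_i/(z−z_i)² − Σ_j 1/(z−w¹_j)² + Σ_j 1/(z−w⁰_j)². In particular u² + u′ has no poles at the points w¹_j. -/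
open Finset

/-- `u(z) = -Σ_i ℓ_i/(z - z_i) + Σ_j 1/(z - w¹_j) - Σ_j 1/(z - w⁰_j)`. -/
noncomputable def uG {N m₁ m₀ : ℕ} (l : Fin N → ℂ) (z : Fin N → ℂ)
    (w1 : Fin m₁ → ℂ) (w0 : Fin m₀ → ℂ) (s : ℂ) : ℂ :=
  -∑ i, l i / (s - z i) + ∑ j, 1 / (s - w1 j) - ∑ j, 1 / (s - w0 j)

/-- `u′(z) = Σ_i ℓ_i/(z - z_i)² - Σ_j 1/(z - w¹_j)² + Σ_j 1/(z - w⁰_j)²`. -/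
noncomputable def uG' {N m₁ m₀ : ℕ} (l : Fin N → ℂ) (z : Fin N → ℂ)
    (w1 : Fin m₁ → ℂ) (w0 : Fin m₀ → ℂ) (s : ℂ) : ℂ :=
  ∑ i, l i / (s - z i) ^ 2 - ∑ j, 1 / (s - w1 j) ^ 2 + ∑ j, 1 / (s - w0 j) ^ 2

/-!
Write `u = ∑ α, c α / (s - p α)` over all poles `p = (z, w¹, w⁰)` with charges
`c = (-ℓ, 1, -1)`, so that `u' = -∑ α, c α / (s - p α) ^ 2`. Partial fractions give
`u² + u' = ∑ α, c α (c α - 1) / (s - p α) ^ 2 + ∑ α, 2 c α u_α(p α) / (s - p α)`,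
where `u_α` is `u` without its `α`-th term; since `1 / 0 = 0` in Lean, `u_α(p α)` is
literally `uG (p α)`. The double poles at `w¹` cancel because `c = 1` there, and the Bethe
equations say that `uG (w¹ j) = 0` and `uG (w⁰ j) = -½ ∑ i, k i / (w⁰ j - z i)`, which kills
the residues at `w¹` and produces `r j` at `w⁰`.
-/

section PartialFractions

variable {K : Type*} [Field K]

theorem div_sub_mul_div_sub {a b x y s : K} (hxy : x ≠ y) (hx : s ≠ x) (hy : s ≠ y) :
    a / (s - x) * (b / (s - y)) = a * b / (x - y) / (s - x) + b * a / (y - x) / (s - y) := by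
  have hxy' : x - y ≠ 0 := sub_ne_zero.2 hxy
  have hyx' : y - x ≠ 0 := sub_ne_zero.2 hxy.symm
  have hx' : s - x ≠ 0 := sub_ne_zero.2 hx
  have hy' : s - y ≠ 0 := sub_ne_zero.2 hy
  field_simp
  ring

variable {ι : Type*} [Fintype ι] [DecidableEq ι] {p : ι → K} {s : K}

theorem sq_sum_div_sub (hp : Function.Injective p) (c : ι → K) (hs : ∀ α, s ≠ p α) :
    (∑ α, c α / (s - p α)) ^ 2
      = ∑ α, c α ^ 2 / (s - p α) ^ 2
        + ∑ α, 2 * c α * (∑ β, c β / (p α - p β)) / (s - p α) := by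
  set g : ι → ι → K := fun α β => c α * c β / (p α - p β) / (s - p α) with hg
  have hpair : ∀ α β, c α / (s - p α) * (c β / (s - p β))
      = (if α = β then c α ^ 2 / (s - p α) ^ 2 else 0) + (g α β + g β α) := by
    intro α β
    by_cases h : α = β
    · subst h
      simp only [hg, if_true, sub_self, div_zero, zero_div, add_zero, ← sq, div_pow]
    · rw [if_neg h, zero_add]
      exact div_sub_mul_div_sub (hp.ne h) (hs α) (hs β)
  calc (∑ α, c α / (s - p α)) ^ 2
      = ∑ α, ∑ β,
          ((if α = β then c α ^ 2 / (s - p α) ^ 2 else 0) + (g α β + g β α)) := by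
        simp only [sq, sum_mul_sum, hpair]
    _ = ∑ α, c α ^ 2 / (s - p α) ^ 2 + 2 * ∑ α, ∑ β, g α β := by
        simp only [sum_add_distrib, sum_ite_eq, mem_univ, if_true]
        rw [sum_comm (f := fun α β => g β α)]
        ring
    _ = _ := by
        rw [mul_sum]
        congr 1
        refine sum_congr rfl fun α _ => ?_
        simp only [hg, mul_sum, sum_div]
        refine sum_congr rfl fun β _ => ?_
        ring

theorem sq_sum_div_sub_sub_sum_div_sub_sq (hp : Function.Injective p) (c : ι → K)
    (hs : ∀ α, s ≠ p α) :
    (∑ α, c α / (s - p α)) ^ 2 - ∑ α, c α / (s - p α) ^ 2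
      = ∑ α, (c α * (c α - 1) / (s - p α) ^ 2
        + 2 * c α * (∑ β, c β / (p α - p β)) / (s - p α)) := by
  rw [sq_sum_div_sub hp c hs, sum_add_distrib, add_sub_right_comm, ← sum_sub_distrib]
  congr 1
  exact sum_congr rfl fun α _ => by ring

end PartialFractions

section Miura

variable {N m₁ m₀ : ℕ} (l : Fin N → ℂ) (z : Fin N → ℂ) (w1 : Fin m₁ → ℂ) (w0 : Fin m₀ → ℂ)

def poles : Fin N ⊕ Fin m₁ ⊕ Fin m₀ → ℂ := Sum.elim z (Sum.elim w1 w0)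

def charges : Fin N ⊕ Fin m₁ ⊕ Fin m₀ → ℂ := Sum.elim (-l) (Sum.elim 1 (-1))

theorem poles_injective (hzinj : Function.Injective z) (hw1inj : Function.Injective w1)
    (hw0inj : Function.Injective w0) (hzw1 : ∀ i j, z i ≠ w1 j) (hzw0 : ∀ i j, z i ≠ w0 j)
    (hw1w0 : ∀ i j, w1 i ≠ w0 j) : Function.Injective (poles z w1 w0) :=
  hzinj.sumElim (hw1inj.sumElim hw0inj hw1w0) fun i => Sum.rec (hzw1 i) (hzw0 i)

theorem uG_eq_sum (x : ℂ) :
    uG l z w1 w0 x = ∑ α, charges l α / (x - poles z w1 w0 α) := by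
  simp only [uG, Fintype.sum_sum_type, charges, poles, Sum.elim_inl, Sum.elim_inr,
    Pi.neg_apply, Pi.one_apply, neg_div, sum_neg_distrib]
  ring

theorem uG'_eq_neg_sum (x : ℂ) :
    uG' l z w1 w0 x = -∑ α, charges l α / (x - poles z w1 w0 α) ^ 2 := by
  simp only [uG', Fintype.sum_sum_type, charges, poles, Sum.elim_inl, Sum.elim_inr,
    Pi.neg_apply, Pi.one_apply, neg_div, sum_neg_distrib]
  ring

theorem uG_apply_z (i : Fin N) :
    uG l z w1 w0 (z i) = -∑ j ∈ univ.erase i, l j / (z i - z j)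
      + ∑ j, 1 / (z i - w1 j) - ∑ j, 1 / (z i - w0 j) := by
  rw [uG, sum_erase _ (by simp)]

theorem uG_apply_w1_eq_zero {j : Fin m₁}
    (hB1 : ∑ i, l i / (w1 j - z i) - ∑ s ∈ univ.erase j, 1 / (w1 j - w1 s)
      + ∑ s, 1 / (w1 j - w0 s) = 0) :
    uG l z w1 w0 (w1 j) = 0 := by
  rw [sum_erase _ (by simp)] at hB1
  rw [uG]
  linear_combination -hB1

theorem uG_apply_w0 (k : Fin N → ℂ) {j : Fin m₀}
    (hB0 : ∑ i, (k i / 2 - l i) / (w0 j - z i) + ∑ s, 1 / (w0 j - w1 s)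
      - ∑ s ∈ univ.erase j, 1 / (w0 j - w0 s) = 0) :
    uG l z w1 w0 (w0 j) = -(∑ i, k i / (w0 j - z i)) / 2 := by
  have hsplit : ∑ i, (k i / 2 - l i) / (w0 j - z i)
      = (∑ i, k i / (w0 j - z i)) / 2 - ∑ i, l i / (w0 j - z i) := by
    rw [sum_div, ← sum_sub_distrib]
    exact sum_congr rfl fun i _ => by ring
  rw [sum_erase _ (by simp)] at hB0
  rw [uG]
  linear_combination hB0 - hsplit

end Miura

theorem miura_global_of_bethe_regular_sing_general (N m₁ m₀ : ℕ)
    (l k : Fin N → ℂ) (z : Fin N → ℂ) (w1 : Fin m₁ → ℂ) (w0 : Fin m₀ → ℂ)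
    (hzinj : Function.Injective z) (hw1inj : Function.Injective w1)
    (hw0inj : Function.Injective w0)
    (hzw1 : ∀ i j, z i ≠ w1 j) (hzw0 : ∀ i j, z i ≠ w0 j)
    (hw1w0 : ∀ i j, w1 i ≠ w0 j)
    (hB1 : ∀ j, ∑ i, l i / (w1 j - z i) - ∑ s ∈ univ.erase j, 1 / (w1 j - w1 s)
      + ∑ s, 1 / (w1 j - w0 s) = 0)
    (hB0 : ∀ j, ∑ i, (k i / 2 - l i) / (w0 j - z i) + ∑ s, 1 / (w0 j - w1 s)
      - ∑ s ∈ univ.erase j, 1 / (w0 j - w0 s) = 0) :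
    ∀ s : ℂ, (∀ i, s ≠ z i) → (∀ j, s ≠ w1 j) → (∀ j, s ≠ w0 j) →
      (uG l z w1 w0 s) ^ 2 + uG' l z w1 w0 s
        = ∑ i, l i * (l i + 1) / (s - z i) ^ 2
          + ∑ i, (2 * l i * (∑ j ∈ univ.erase i, l j / (z i - z j)
              - ∑ j, 1 / (z i - w1 j) + ∑ j, 1 / (z i - w0 j))) / (s - z i)
          + ∑ j, 2 / (s - w0 j) ^ 2
          + ∑ j, (∑ i, k i / (w0 j - z i)) / (s - w0 j) := by
  intro s hsz hsw1 hsw0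
  have hs : ∀ α, s ≠ poles z w1 w0 α := Sum.rec hsz (Sum.rec hsw1 hsw0)
  have hp := poles_injective z w1 w0 hzinj hw1inj hw0inj hzw1 hzw0 hw1w0
  rw [uG'_eq_neg_sum, ← sub_eq_add_neg, uG_eq_sum, sq_sum_div_sub_sub_sum_div_sub_sq hp _ hs]
  simp only [← uG_eq_sum]
  rw [Fintype.sum_sum_type, Fintype.sum_sum_type]
  simp only [poles, charges, Sum.elim_inl, Sum.elim_inr, Pi.neg_apply, Pi.one_apply]
  have hzpart : ∑ i, (-l i * (-l i - 1) / (s - z i) ^ 2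
        + 2 * -l i * uG l z w1 w0 (z i) / (s - z i))
      = ∑ i, l i * (l i + 1) / (s - z i) ^ 2
        + ∑ i, (2 * l i * (∑ j ∈ univ.erase i, l j / (z i - z j)
              - ∑ j, 1 / (z i - w1 j) + ∑ j, 1 / (z i - w0 j))) / (s - z i) := by
    rw [← sum_add_distrib]
    exact sum_congr rfl fun i _ => by rw [uG_apply_z]; ring
  have hw1part : ∑ j, (1 * (1 - 1) / (s - w1 j) ^ 2
      + 2 * 1 * uG l z w1 w0 (w1 j) / (s - w1 j)) = 0 :=
    sum_eq_zero fun j _ => by rw [uG_apply_w1_eq_zero l z w1 w0 (hB1 j)]; ring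
  have hw0part : ∑ j, (-1 * (-1 - 1) / (s - w0 j) ^ 2
        + 2 * -1 * uG l z w1 w0 (w0 j) / (s - w0 j))
      = ∑ j, 2 / (s - w0 j) ^ 2 + ∑ j, (∑ i, k i / (w0 j - z i)) / (s - w0 j) := by
    rw [← sum_add_distrib]
    exact sum_congr rfl fun j _ => by rw [uG_apply_w0 l z w1 w0 k (hB0 j)]; ring
  rw [hzpart, hw1part, hw0part]
  ring

theorem miura_global_of_bethe_regular_sing (N m₁ m₀ : ℕ) (hN : 1 ≤ N)
    (l k : Fin N → ℂ) (z : Fin N → ℂ) (w1 : Fin m₁ → ℂ) (w0 : Fin m₀ → ℂ)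
    (hzinj : Function.Injective z) (hw1inj : Function.Injective w1)
    (hw0inj : Function.Injective w0)
    (hzw1 : ∀ i j, z i ≠ w1 j) (hzw0 : ∀ i j, z i ≠ w0 j)
    (hw1w0 : ∀ i j, w1 i ≠ w0 j)
    (hB1 : ∀ j, ∑ i, l i / (w1 j - z i) - ∑ s ∈ univ.erase j, 1 / (w1 j - w1 s)
      + ∑ s, 1 / (w1 j - w0 s) = 0)
    (hB0 : ∀ j, ∑ i, (k i / 2 - l i) / (w0 j - z i) + ∑ s, 1 / (w0 j - w1 s)
      - ∑ s ∈ univ.erase j, 1 / (w0 j - w0 s) = 0) :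
    ∀ s : ℂ, (∀ i, s ≠ z i) → (∀ j, s ≠ w1 j) → (∀ j, s ≠ w0 j) →
      (uG l z w1 w0 s) ^ 2 + uG' l z w1 w0 s
        = ∑ i, l i * (l i + 1) / (s - z i) ^ 2
          + ∑ i, (2 * l i * (∑ j ∈ univ.erase i, l j / (z i - z j)
              - ∑ j, 1 / (z i - w1 j) + ∑ j, 1 / (z i - w0 j))) / (s - z i)
          + ∑ j, 2 / (s - w0 j) ^ 2
          + ∑ j, (∑ i, k i / (w0 j - z i)) / (s - w0 j) :=
  miura_global_of_bethe_regular_sing_general N m₁ m₀ l k z w1 w0 hzinj hw1inj hw0inj hzw1 hzw0 hw1w0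
    hB1 hB0
end

section
/- Let x₀ ∈ ℂ and let v = 2T^{−2} + Σ_{n≥−1} v_n T^n be a formal Laurent series over ℂ. Suppose there exists a formal power series U ∈ ℂ[[T]] such that u = −T^{−1} + U satisfies u² + u′ = v and U_0 + x₀/2 = 0 (U_0 the constant term of U). Then v_{−1} = x₀ and (1/4)·x₀³ − v_0·x₀ + v_1 = 0. -/
/-!
Write `u = -T⁻¹ + f`. Then `u² + u′ = 2T⁻² - 2T⁻¹f + f² + f′`, and away from `T⁻²` the cross
term and the derivative combine: `vₙ = (n - 1) fₙ₊₁ + (f²)ₙ`. For a power series `f = U` this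
gives `v₋₁ = -2U₀`, `v₀ = U₀² - U₁` and `v₁ = 2U₀U₁` (the coefficient of `U₂` vanishes). With
`U₀ = -x₀/2` the first is `v₋₁ = x₀`, and in the cubic the two `U₁` terms cancel.
-/

/-- The formal derivative of a Laurent series: `(Σ aₙ Tⁿ)' = Σ n aₙ Tⁿ⁻¹`. -/
noncomputable def lderiv (f : LaurentSeries ℂ) : LaurentSeries ℂ :=
  HahnSeries.single (-1 : ℤ) (1 : ℂ) *
    { coeff := fun n => (n : ℂ) * f.coeff n
      isPWO_support' := f.isPWO_support'.mono (by
        intro n hn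
        simp only [Function.mem_support] at hn ⊢
        exact fun h => hn (by rw [h, mul_zero])) }

open HahnSeries PowerSeries

noncomputable def miura (u : LaurentSeries ℂ) : LaurentSeries ℂ :=
  u ^ 2 + lderiv u

theorem coeff_single_neg_one_mul {R : Type*} [Semiring R] (f : LaurentSeries R) (n : ℤ) :
    (single (-1 : ℤ) (1 : R) * f).coeff n = f.coeff (n + 1) := by
  simp [coeff_single_mul]

theorem coeff_lderiv (f : LaurentSeries ℂ) (n : ℤ) :
    (lderiv f).coeff n = ((n : ℂ) + 1) * f.coeff (n + 1) := by
  rw [lderiv, coeff_single_neg_one_mul]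
  push_cast
  rfl

theorem coeff_miura_neg_inv_add (f : LaurentSeries ℂ) {n : ℤ} (hn : n ≠ -2) :
    (miura (-single (-1 : ℤ) (1 : ℂ) + f)).coeff n =
      ((n : ℂ) - 1) * f.coeff (n + 1) + (f ^ 2).coeff n := by
  have hsq : (-single (-1 : ℤ) (1 : ℂ) + f) ^ 2 =
      single (-2 : ℤ) 1 - (single (-1 : ℤ) 1 * f + single (-1 : ℤ) 1 * f) + f ^ 2 := by
    rw [← show single (-1 : ℤ) (1 : ℂ) * single (-1) 1 = single (-2) 1 by
      rw [single_mul_single]; norm_num]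
    ring
  have hpole : (single (-1 : ℤ) (1 : ℂ)).coeff (n + 1) = 0 := by
    rw [coeff_single_of_ne]; omega
  simp only [miura, hsq, coeff_lderiv, coeff_add, coeff_sub, coeff_neg, coeff_single_of_ne hn,
    hpole, coeff_single_neg_one_mul]
  ring

theorem coeff_miura_neg_inv_add_ofPowerSeries (U : PowerSeries ℂ) :
    (miura (-single (-1 : ℤ) (1 : ℂ) + ofPowerSeries ℤ ℂ U)).coeff (-1) = -2 * coeff 0 U ∧
    (miura (-single (-1 : ℤ) (1 : ℂ) + ofPowerSeries ℤ ℂ U)).coeff 0 =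
      coeff 0 U ^ 2 - coeff 1 U ∧
    (miura (-single (-1 : ℤ) (1 : ℂ) + ofPowerSeries ℤ ℂ U)).coeff 1 =
      2 * coeff 0 U * coeff 1 U := by
  have hsq : ofPowerSeries ℤ ℂ U ^ 2 = ofPowerSeries ℤ ℂ (U * U) := by rw [sq, map_mul]
  refine ⟨?_, ?_, ?_⟩ <;>
    rw [coeff_miura_neg_inv_add _ (by decide), hsq, PowerSeries.coeff_coe,
      PowerSeries.coeff_coe] <;>
    simp [coeff_one_mul] <;> ring

theorem no_monodromy_conditions_of_local_miura_general (x₀ : ℂ) (V : LaurentSeries ℂ)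
    (U : PowerSeries ℂ)
    (hU : (-(HahnSeries.single (-1 : ℤ) (1 : ℂ)) + HahnSeries.ofPowerSeries ℤ ℂ U) ^ 2 +
        lderiv (-(HahnSeries.single (-1 : ℤ) (1 : ℂ)) + HahnSeries.ofPowerSeries ℤ ℂ U) = V)
    (h₀ : PowerSeries.coeff 0 U + x₀ / 2 = 0) :
    V.coeff (-1) = x₀ ∧
      (1 / 4 : ℂ) * x₀ ^ 3 - V.coeff 0 * x₀ + V.coeff 1 = 0 := by
  obtain ⟨hVm1, hV0, hV1⟩ := coeff_miura_neg_inv_add_ofPowerSeries U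
  rw [miura, hU] at hVm1 hV0 hV1
  constructor
  · linear_combination hVm1 - 2 * h₀
  · linear_combination -x₀ * hV0 + hV1 +
      (x₀ ^ 2 / 2 - x₀ * coeff 0 U + 2 * coeff 1 U) * h₀

/-- If `v = 2T⁻² + Σ_{n ≥ -1} vₙ Tⁿ` is the Miura transform `u² + u′` of `u = -T⁻¹ + U`
with `U₀ + x₀/2 = 0`, then `v₋₁ = x₀` and `(1/4)x₀³ - v₀·x₀ + v₁ = 0`. -/
theorem no_monodromy_conditions_of_local_miura (x₀ : ℂ) (V : LaurentSeries ℂ)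
    (h₂ : V.coeff (-2) = 2)
    (hlow : ∀ n : ℤ, n < -2 → V.coeff n = 0)
    (U : PowerSeries ℂ)
    (hU : (-(HahnSeries.single (-1 : ℤ) (1 : ℂ)) + HahnSeries.ofPowerSeries ℤ ℂ U) ^ 2 +
        lderiv (-(HahnSeries.single (-1 : ℤ) (1 : ℂ)) + HahnSeries.ofPowerSeries ℤ ℂ U) = V)
    (h₀ : PowerSeries.coeff 0 U + x₀ / 2 = 0) :
    V.coeff (-1) = x₀ ∧
      (1 / 4 : ℂ) * x₀ ^ 3 - V.coeff 0 * x₀ + V.coeff 1 = 0 :=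
  no_monodromy_conditions_of_local_miura_general x₀ V U hU h₀
end
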